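/- Let a, b, c ≥ 1 and let T : {1,…,a} × {1,…,b} × {1,…,c} → ℝ be an order-3 real tensor (e.g. a convolutional weight tensor). Let M₁ be the c×(a·b) matrix flattening of T defined by M₁(k, (i,j)) = T(i,j,k), and let M₂ be the (b·c)×a matrix flattening defined by M₂((j,k), i) = T(i,j,k). Then ‖M₁‖₂² ≤ min(a, b) · ‖M₂‖₂²; equivalently, (1/min(a,b))‖M₁‖₂² ≤ ‖M₂‖₂², so the largest singular values of the two flattenings of the same tensor are comparable up to a factor of min(a,b). -/

import Mathlib

/-!
Group the columns `(i, j)` of `M₁` by one index and view `M₁` as blocks placed side by side;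
such a matrix has squared spectral norm at most the sum of the squared norms of its blocks.
Grouped by `j`, the `b` blocks are the `c × a` row blocks of `M₂`, each of norm at most
`‖M₂‖₂`. Grouped by `i`, the `a` blocks are `c × b` matrices whose Frobenius norm is the
norm of the `i`-th column of `M₂`, again at most `‖M₂‖₂`.
-/

open Matrix

/-- The spectral norm (largest singular value) of a real matrix: its operator norm
as a linear map between Euclidean `ℓ²` spaces. -/
noncomputable def matrixSpectralNormL2 {m n : Type*} [Fintype m] [Fintype n] [DecidableEq n]
    (M : Matrix m n ℝ) : ℝ :=
  ‖LinearMap.toContinuousLinearMap (Matrix.toEuclideanLin M)‖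

section

variable {m n : Type*} [Fintype n] [DecidableEq n]

lemma toEuclideanLin_apply_apply (M : Matrix m n ℝ) (x : EuclideanSpace ℝ n) (k : m) :
    toEuclideanLin M x k = ∑ p, M k p * x p :=
  rfl

variable [Fintype m]

lemma matrixSpectralNormL2_nonneg (M : Matrix m n ℝ) : 0 ≤ matrixSpectralNormL2 M :=
  norm_nonneg _

lemma norm_toEuclideanLin_le (M : Matrix m n ℝ) (x : EuclideanSpace ℝ n) :
    ‖toEuclideanLin M x‖ ≤ matrixSpectralNormL2 M * ‖x‖ :=
  (LinearMap.toContinuousLinearMap (toEuclideanLin M)).le_opNorm x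

lemma matrixSpectralNormL2_le_of_norm_le (M : Matrix m n ℝ) {C : ℝ} (hC : 0 ≤ C)
    (h : ∀ x : EuclideanSpace ℝ n, ‖toEuclideanLin M x‖ ≤ C * ‖x‖) :
    matrixSpectralNormL2 M ≤ C :=
  ContinuousLinearMap.opNorm_le_bound _ hC h

lemma matrixSpectralNormL2_sq_le_of_norm_sq_le (M : Matrix m n ℝ) {C : ℝ} (hC : 0 ≤ C)
    (h : ∀ x : EuclideanSpace ℝ n, ‖toEuclideanLin M x‖ ^ 2 ≤ C * ‖x‖ ^ 2) :
    matrixSpectralNormL2 M ^ 2 ≤ C := by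
  refine (Real.le_sqrt (matrixSpectralNormL2_nonneg M) hC).mp <|
    matrixSpectralNormL2_le_of_norm_le M (Real.sqrt_nonneg C) fun x => ?_
  rw [← Real.sqrt_sq (norm_nonneg x), ← Real.sqrt_mul hC]
  exact Real.le_sqrt_of_sq_le (h x)

lemma sum_sq_col_le_matrixSpectralNormL2_sq (M : Matrix m n ℝ) (i : n) :
    ∑ k, M k i ^ 2 ≤ matrixSpectralNormL2 M ^ 2 := by
  have h := norm_toEuclideanLin_le M (EuclideanSpace.single i 1)
  rw [PiLp.norm_single, norm_one, mul_one] at h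
  have hcol : ‖toEuclideanLin M (EuclideanSpace.single i 1)‖ ^ 2 = ∑ k, M k i ^ 2 := by
    simp [EuclideanSpace.real_norm_sq_eq, toEuclideanLin_apply_apply]
  exact hcol ▸ pow_le_pow_left₀ (norm_nonneg _) h 2

lemma matrixSpectralNormL2_sq_le_sum_sq (M : Matrix m n ℝ) :
    matrixSpectralNormL2 M ^ 2 ≤ ∑ k, ∑ p, M k p ^ 2 := by
  refine matrixSpectralNormL2_sq_le_of_norm_sq_le M (by positivity) fun x => ?_
  simp only [EuclideanSpace.real_norm_sq_eq, toEuclideanLin_apply_apply]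
  rw [Finset.sum_mul]
  exact Finset.sum_le_sum fun k _ => Finset.sum_mul_sq_le_sq_mul_sq _ _ _

lemma matrixSpectralNormL2_submatrix_le {m' : Type*} [Fintype m'] (M : Matrix m n ℝ)
    {f : m' → m} (hf : f.Injective) :
    matrixSpectralNormL2 (M.submatrix f id) ≤ matrixSpectralNormL2 M := by
  refine matrixSpectralNormL2_le_of_norm_le _ (matrixSpectralNormL2_nonneg M) fun x => ?_
  refine le_trans ?_ (norm_toEuclideanLin_le M x)
  rw [← sq_le_sq₀ (norm_nonneg _) (norm_nonneg _), EuclideanSpace.real_norm_sq_eq,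
    EuclideanSpace.real_norm_sq_eq]
  calc ∑ k, toEuclideanLin M x (f k) ^ 2
      = ∑ k ∈ Finset.univ.map ⟨f, hf⟩, toEuclideanLin M x k ^ 2 := by
        rw [Finset.sum_map]; rfl
    _ ≤ ∑ k, toEuclideanLin M x k ^ 2 := Finset.sum_le_univ_sum_of_nonneg fun k => sq_nonneg _

lemma matrixSpectralNormL2_submatrix_id_equiv_le {n' : Type*} [Fintype n'] [DecidableEq n']
    (M : Matrix m n ℝ) (e : n' ≃ n) :
    matrixSpectralNormL2 (M.submatrix id e) ≤ matrixSpectralNormL2 M := by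
  refine matrixSpectralNormL2_le_of_norm_le _ (matrixSpectralNormL2_nonneg M) fun x => ?_
  have := norm_toEuclideanLin_le M (LinearIsometryEquiv.piLpCongrLeft 2 ℝ ℝ e x)
  convert this using 2
  · ext k
    simp [toEuclideanLin_apply_apply, LinearIsometryEquiv.piLpCongrLeft_apply, ← e.sum_comp]
  · simp

lemma matrixSpectralNormL2_submatrix_equiv {n' : Type*} [Fintype n'] [DecidableEq n']
    (M : Matrix m n ℝ) (e : n' ≃ n) :
    matrixSpectralNormL2 (M.submatrix id e) = matrixSpectralNormL2 M := by
  refine (matrixSpectralNormL2_submatrix_id_equiv_le M e).antisymm ?_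
  simpa using matrixSpectralNormL2_submatrix_id_equiv_le (M.submatrix id e) e.symm

lemma matrixSpectralNormL2_sq_le_sum_blocks {ι : Type*} [Fintype ι] [DecidableEq ι]
    (M : Matrix m (ι × n) ℝ) :
    matrixSpectralNormL2 M ^ 2 ≤
      ∑ j, matrixSpectralNormL2 (M.submatrix id (Prod.mk j)) ^ 2 := by
  refine matrixSpectralNormL2_sq_le_of_norm_sq_le M (by positivity) fun x => ?_
  set B := fun j => M.submatrix id (Prod.mk j)
  set y : ι → EuclideanSpace ℝ n := fun j => WithLp.toLp 2 fun p => x (j, p)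
  have hsum : toEuclideanLin M x = ∑ j, toEuclideanLin (B j) (y j) := by
    ext k
    simp [toEuclideanLin_apply_apply, Fintype.sum_prod_type, B, y, mulVec, dotProduct]
  have hy : ‖x‖ ^ 2 = ∑ j, ‖y j‖ ^ 2 := by
    simp [EuclideanSpace.real_norm_sq_eq, Fintype.sum_prod_type, y]
  calc ‖toEuclideanLin M x‖ ^ 2 ≤ (∑ j, matrixSpectralNormL2 (B j) * ‖y j‖) ^ 2 := by
        rw [hsum]
        gcongr
        exact (norm_sum_le _ _).trans (Finset.sum_le_sum fun j _ => norm_toEuclideanLin_le _ _)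
    _ ≤ (∑ j, matrixSpectralNormL2 (B j) ^ 2) * ‖x‖ ^ 2 :=
        hy ▸ Finset.sum_mul_sq_le_sq_mul_sq _ _ _

end

theorem tensor_flattening_spectral_norm_general
    (a b c : ℕ)
    (T : Fin a → Fin b → Fin c → ℝ)
    (M₁ : Matrix (Fin c) (Fin a × Fin b) ℝ)
    (M₂ : Matrix (Fin b × Fin c) (Fin a) ℝ)
    (hM₁ : ∀ (k : Fin c) (i : Fin a) (j : Fin b), M₁ k (i, j) = T i j k)
    (hM₂ : ∀ (j : Fin b) (k : Fin c) (i : Fin a), M₂ (j, k) i = T i j k) :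
    matrixSpectralNormL2 M₁ ^ 2 ≤ (min a b : ℕ) * matrixSpectralNormL2 M₂ ^ 2 := by
  set N := matrixSpectralNormL2 M₂
  set M₁' := M₁.submatrix id (Equiv.prodComm (Fin b) (Fin a))
  have slice_le (i : Fin a) :
      matrixSpectralNormL2 (M₁.submatrix id (Prod.mk i)) ^ 2 ≤ N ^ 2 := by
    refine (matrixSpectralNormL2_sq_le_sum_sq _).trans ?_
    refine le_of_eq_of_le ?_ (sum_sq_col_le_matrixSpectralNormL2_sq M₂ i)
    simp [Finset.sum_comm (γ := Fin c), Fintype.sum_prod_type, hM₁, hM₂]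
  have block_le (j : Fin b) :
      matrixSpectralNormL2 (M₁'.submatrix id (Prod.mk j)) ^ 2 ≤ N ^ 2 := by
    have hblock : M₁'.submatrix id (Prod.mk j) = M₂.submatrix (Prod.mk j) id := by
      ext k i
      simp [M₁', hM₁, hM₂]
    rw [hblock]
    exact pow_le_pow_left₀ (matrixSpectralNormL2_nonneg _)
      (matrixSpectralNormL2_submatrix_le M₂ (Prod.mk_right_injective j)) 2
  have bound_a : matrixSpectralNormL2 M₁ ^ 2 ≤ a * N ^ 2 :=
    (matrixSpectralNormL2_sq_le_sum_blocks M₁).trans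
      (by simpa using Finset.sum_le_card_nsmul Finset.univ _ _ fun i _ => slice_le i)
  have bound_b : matrixSpectralNormL2 M₁ ^ 2 ≤ b * N ^ 2 := by
    rw [← matrixSpectralNormL2_submatrix_equiv M₁ (Equiv.prodComm (Fin b) (Fin a))]
    exact (matrixSpectralNormL2_sq_le_sum_blocks M₁').trans
      (by simpa using Finset.sum_le_card_nsmul Finset.univ _ _ fun j _ => block_le j)
  rw [Nat.cast_min, min_mul_of_nonneg _ _ (sq_nonneg N)]
  exact le_min bound_a bound_b

/-- **The largest singular values of two flattenings of the same order-3 tensor are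
comparable.** For `T : ℝ^{a×b×c}`, with `M₁` the `c×(a·b)` flattening
`M₁(k,(i,j)) = T(i,j,k)` and `M₂` the `(b·c)×a` flattening `M₂((j,k),i) = T(i,j,k)`,
one has `‖M₁‖₂² ≤ min(a,b) · ‖M₂‖₂²`. -/
theorem tensor_flattening_spectral_norm
    (a b c : ℕ) (ha : 1 ≤ a) (hb : 1 ≤ b) (hc : 1 ≤ c)
    (T : Fin a → Fin b → Fin c → ℝ)
    (M₁ : Matrix (Fin c) (Fin a × Fin b) ℝ)
    (M₂ : Matrix (Fin b × Fin c) (Fin a) ℝ)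
    (hM₁ : ∀ (k : Fin c) (i : Fin a) (j : Fin b), M₁ k (i, j) = T i j k)
    (hM₂ : ∀ (j : Fin b) (k : Fin c) (i : Fin a), M₂ (j, k) i = T i j k) :
    matrixSpectralNormL2 M₁ ^ 2 ≤ (min a b : ℕ) * matrixSpectralNormL2 M₂ ^ 2 :=
  tensor_flattening_spectral_norm_general a b c T M₁ M₂ hM₁ hM₂
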